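/- Under the hypotheses of the error-bound lemma (f differentiable and μ-strongly convex with μ > 0, X = ∩_{i=1}^m {x : ⟨a_i,x⟩ ≤ b_i} nonempty with minimizer x* of f over X, x_γδ* the minimizer of F_{γδ}, p = Π_X[x_γδ*], β > 0 a Hoffman constant with β Σ_i dist(x,X_i) ≥ dist(x,X) for all x, and L ≥ ‖∇f(z)‖ on the segment joining x_γδ* and p), if moreover γ ≥ 4mβL, then ‖x* − x_γδ*‖² ≤ γδ/(2μ α_min), where α_min = min_{1≤i≤m} ‖a_i‖. -/

import Mathlib

/-!
The penalized objective `F = f + (γ/m) ∑ hᵢ` is `μ`-strongly convex, so at its minimizer `x_γδ`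
we have `F x_γδ + μ/2 ‖x* - x_γδ‖² ≤ F x*`. At the feasible point `x*` every penalty is at most
`δ / (4 α_min)`, whence `F x* ≤ f x* + γδ / (4 α_min)`. On the other side
`f x* ≤ f p ≤ f x_γδ + L ‖x_γδ - p‖`, and by the Hoffman bound and `dist(x, Xᵢ) ≤ hᵢ(x)` the last
term is at most `βL ∑ hᵢ(x_γδ) ≤ (γ/m) ∑ hᵢ(x_γδ)`, that is `f x* ≤ F x_γδ`. Chaining the three
inequalities leaves `μ/2 ‖x* - x_γδ‖² ≤ γδ / (4 α_min)`.
-/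

open scoped RealInnerProductSpace

/-- The one-sided Huber penalty `h_δ(x; a, b)`. -/
noncomputable def huber {n : ℕ} (δ : ℝ) (a : EuclideanSpace ℝ (Fin n)) (b : ℝ)
    (x : EuclideanSpace ℝ (Fin n)) : ℝ :=
  if δ < ⟪a, x⟫ - b then (⟪a, x⟫ - b) / ‖a‖
  else if -δ ≤ ⟪a, x⟫ - b then (⟪a, x⟫ - b + δ) ^ 2 / (4 * δ * ‖a‖)
  else 0

open Set Filter Topology

section StrongConvexity

variable {E : Type*} [NormedAddCommGroup E] [NormedSpace ℝ E] {s : Set E} {μ : ℝ} {f g : E → ℝ}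

lemma StrongConvexOn.add_convexOn (hf : StrongConvexOn s μ f) (hg : ConvexOn ℝ s g) :
    StrongConvexOn s μ (f + g) := by
  unfold StrongConvexOn
  simpa using hf.add hg.uniformConvexOn_zero

lemma StrongConvexOn.add_sq_le_of_isMinOn (hf : StrongConvexOn s μ f) {x₀ y : E} (hx₀ : x₀ ∈ s)
    (hy : y ∈ s) (hmin : IsMinOn f s x₀) : f x₀ + μ / 2 * ‖y - x₀‖ ^ 2 ≤ f y := by
  have hstep : ∀ t ∈ Ioc (0 : ℝ) 1, f x₀ + (1 - t) * (μ / 2 * ‖y - x₀‖ ^ 2) ≤ f y := by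
    rintro t ⟨ht₀, ht₁⟩
    have hconv := hf.2 hx₀ hy (sub_nonneg.2 ht₁) ht₀.le (sub_add_cancel 1 t)
    have hle : f x₀ ≤ f ((1 - t) • x₀ + t • y) :=
      hmin (hf.1 hx₀ hy (sub_nonneg.2 ht₁) ht₀.le (sub_add_cancel 1 t))
    rw [smul_eq_mul, smul_eq_mul, norm_sub_rev] at hconv
    have : t * (f x₀ + (1 - t) * (μ / 2 * ‖y - x₀‖ ^ 2)) ≤ t * f y := by linarith
    exact le_of_mul_le_mul_left this ht₀
  have hlim : Tendsto (fun t : ℝ => f x₀ + (1 - t) * (μ / 2 * ‖y - x₀‖ ^ 2)) (𝓝[>] 0)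
      (𝓝 (f x₀ + μ / 2 * ‖y - x₀‖ ^ 2)) := by
    have : Continuous fun t : ℝ => f x₀ + (1 - t) * (μ / 2 * ‖y - x₀‖ ^ 2) := by fun_prop
    simpa using (this.tendsto 0).mono_left nhdsWithin_le_nhds
  exact le_of_tendsto hlim (eventually_of_mem (Ioc_mem_nhdsGT one_pos) hstep)

end StrongConvexity

lemma norm_sub_le_of_norm_gradient_le {F : Type*} [NormedAddCommGroup F] [InnerProductSpace ℝ F]
    [CompleteSpace F] {f : F → ℝ} (hf : Differentiable ℝ f) {x y : F} {L : ℝ}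
    (hL : ∀ z ∈ segment ℝ x y, ‖gradient f z‖ ≤ L) : ‖f y - f x‖ ≤ L * ‖y - x‖ := by
  refine (convex_segment x y).norm_image_sub_le_of_norm_fderiv_le (fun z _ => hf z)
    (fun z hz => ?_) (left_mem_segment ℝ x y) (right_mem_segment ℝ x y)
  simpa [gradient] using hL z hz

noncomputable def scalarHuber (δ t : ℝ) : ℝ :=
  if δ < t then t else if -δ ≤ t then (t + δ) ^ 2 / (4 * δ) else 0

section ScalarHuber

variable {δ : ℝ}

/-- `scalarHuber δ` is the supremum of the affine functions `t ↦ s (t + δ) - δ s²`, `0 ≤ s ≤ 1`. -/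
lemma affine_le_scalarHuber (hδ : 0 < δ) {s : ℝ} (hs₀ : 0 ≤ s) (hs₁ : s ≤ 1) (t : ℝ) :
    s * (t + δ) - δ * s ^ 2 ≤ scalarHuber δ t := by
  unfold scalarHuber
  split_ifs with h₁ h₂
  · nlinarith [mul_nonneg (sub_nonneg.2 hs₁) (by nlinarith : (0 : ℝ) ≤ t - δ * s)]
  · rw [le_div_iff₀ (by positivity)]
    nlinarith [sq_nonneg (t + δ - 2 * δ * s)]
  · nlinarith [mul_nonneg hs₀ hs₀, mul_nonneg hs₀ (by linarith : (0 : ℝ) ≤ -(t + δ))]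

lemma exists_scalarHuber_eq_affine (hδ : 0 < δ) (t : ℝ) :
    ∃ s, 0 ≤ s ∧ s ≤ 1 ∧ scalarHuber δ t = s * (t + δ) - δ * s ^ 2 := by
  unfold scalarHuber
  split_ifs with h₁ h₂
  · exact ⟨1, zero_le_one, le_rfl, by ring⟩
  · refine ⟨(t + δ) / (2 * δ), div_nonneg (by linarith) (by positivity),
      (div_le_one (by positivity)).2 (by linarith), ?_⟩
    field_simp
    ring
  · exact ⟨0, le_rfl, zero_le_one, by ring⟩

lemma convexOn_scalarHuber (hδ : 0 < δ) : ConvexOn ℝ univ (scalarHuber δ) := by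
  refine ⟨convex_univ, fun x _ y _ c d hc hd hcd => ?_⟩
  obtain ⟨s, hs₀, hs₁, hs⟩ := exists_scalarHuber_eq_affine hδ (c • x + d • y)
  have hx := mul_le_mul_of_nonneg_left (affine_le_scalarHuber hδ hs₀ hs₁ x) hc
  have hy := mul_le_mul_of_nonneg_left (affine_le_scalarHuber hδ hs₀ hs₁ y) hd
  simp only [smul_eq_mul] at hs ⊢
  rw [hs]
  linear_combination hx + hy + (δ * s ^ 2 - δ * s) * hcd

lemma max_le_scalarHuber (hδ : 0 < δ) (t : ℝ) : max t 0 ≤ scalarHuber δ t :=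
  max_le (by simpa using affine_le_scalarHuber hδ zero_le_one le_rfl t)
    (by simpa using affine_le_scalarHuber hδ le_rfl zero_le_one t)

lemma scalarHuber_le_of_nonpos (hδ : 0 < δ) {t : ℝ} (ht : t ≤ 0) : scalarHuber δ t ≤ δ / 4 := by
  unfold scalarHuber
  split_ifs with h₁ h₂
  · linarith
  · rw [div_le_div_iff₀ (by positivity) (by norm_num)]
    nlinarith
  · positivity

end ScalarHuber

section Huber

variable {n : ℕ} {δ : ℝ} {a : EuclideanSpace ℝ (Fin n)} {b : ℝ}

lemma huber_eq_scalarHuber (x : EuclideanSpace ℝ (Fin n)) :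
    huber δ a b x = scalarHuber δ (⟪a, x⟫ - b) / ‖a‖ := by
  unfold huber scalarHuber
  split_ifs <;> simp [div_div]

lemma huber_nonneg (hδ : 0 < δ) (x : EuclideanSpace ℝ (Fin n)) : 0 ≤ huber δ a b x := by
  rw [huber_eq_scalarHuber]
  exact div_nonneg ((le_max_right _ _).trans (max_le_scalarHuber hδ _)) (norm_nonneg a)

lemma convexOn_huber (hδ : 0 < δ) : ConvexOn ℝ univ (huber δ a b) := by
  let g : EuclideanSpace ℝ (Fin n) →ᵃ[ℝ] ℝ :=
    (innerSL ℝ a).toLinearMap.toAffineMap - AffineMap.const ℝ _ b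
  have h := ((convexOn_scalarHuber hδ).comp_affineMap g).smul (inv_nonneg.2 (norm_nonneg a))
  have heq : huber δ a b = fun x => ‖a‖⁻¹ • (scalarHuber δ ∘ g) x := by
    ext x
    simp [g, huber_eq_scalarHuber, div_eq_inv_mul]
  rw [heq]
  exact preimage_univ ▸ h

lemma huber_le_of_inner_le (hδ : 0 < δ) {x : EuclideanSpace ℝ (Fin n)} (hx : ⟪a, x⟫ ≤ b) :
    huber δ a b x ≤ δ / (4 * ‖a‖) := by
  rw [huber_eq_scalarHuber, ← div_div]
  gcongr
  exact scalarHuber_le_of_nonpos hδ (by linarith)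

lemma infDist_halfSpace_le (ha : a ≠ 0) (x : EuclideanSpace ℝ (Fin n)) :
    Metric.infDist x {y | ⟪a, y⟫ ≤ b} ≤ max (⟪a, x⟫ - b) 0 / ‖a‖ := by
  have hna : 0 < ‖a‖ := norm_pos_iff.2 ha
  set c := max (⟪a, x⟫ - b) 0 / ‖a‖ ^ 2
  -- the projection of `x` onto the half-space
  have hmem : x - c • a ∈ {y | ⟪a, y⟫ ≤ b} := by
    have : c * ‖a‖ ^ 2 = max (⟪a, x⟫ - b) 0 := div_mul_cancel₀ _ (by positivity)
    simp only [mem_ofPred_eq, inner_sub_right, real_inner_smul_right, real_inner_self_eq_norm_sq,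
      this]
    linarith [le_max_left (⟪a, x⟫ - b) 0]
  calc Metric.infDist x {y | ⟪a, y⟫ ≤ b} ≤ dist x (x - c • a) := Metric.infDist_le_dist_of_mem hmem
    _ = max (⟪a, x⟫ - b) 0 / ‖a‖ := by
      rw [dist_eq_norm, sub_sub_cancel, norm_smul, Real.norm_of_nonneg (by positivity)]
      simp only [c]
      field_simp

lemma infDist_halfSpace_le_huber (hδ : 0 < δ) (ha : a ≠ 0) (x : EuclideanSpace ℝ (Fin n)) :
    Metric.infDist x {y | ⟪a, y⟫ ≤ b} ≤ huber δ a b x := by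
  rw [huber_eq_scalarHuber]
  exact (infDist_halfSpace_le ha x).trans (by gcongr; exact max_le_scalarHuber hδ _)

end Huber

section Penalty

variable {ι : Type*} [Fintype ι] {n : ℕ} {δ : ℝ} (a : ι → EuclideanSpace ℝ (Fin n)) (b : ι → ℝ)

lemma convexOn_sum_huber (hδ : 0 < δ) : ConvexOn ℝ univ fun x => ∑ i, huber δ (a i) (b i) x := by
  have := Finset.sum_induction (s := Finset.univ) (fun i => huber δ (a i) (b i)) (ConvexOn ℝ univ)
    (fun _ _ => ConvexOn.add) (convexOn_const 0 convex_univ) (fun i _ => convexOn_huber hδ)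
  simpa only [Finset.sum_fn] using this

lemma sum_huber_le_of_mem [Nonempty ι] (hδ : 0 < δ) (ha : ∀ i, a i ≠ 0)
    {x : EuclideanSpace ℝ (Fin n)} (hx : ∀ i, ⟪a i, x⟫ ≤ b i) :
    ∑ i, huber δ (a i) (b i) x ≤ Fintype.card ι * (δ / (4 * ⨅ i, ‖a i‖)) := by
  obtain ⟨j, hj⟩ := exists_eq_ciInf_of_finite (f := fun i => ‖a i‖)
  have hα : 0 < ⨅ i, ‖a i‖ := hj ▸ norm_pos_iff.2 (ha j)
  rw [← nsmul_eq_mul]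
  refine Finset.sum_le_card_nsmul _ _ _ fun i _ => (huber_le_of_inner_le hδ (hx i)).trans ?_
  gcongr
  exact ciInf_le (Set.finite_range _).bddBelow i

lemma norm_sub_le_mul_sum_huber (hδ : 0 < δ) (ha : ∀ i, a i ≠ 0) {β : ℝ} (hβ : 0 ≤ β)
    {X : Set (EuclideanSpace ℝ (Fin n))} {x p : EuclideanSpace ℝ (Fin n)} (hp : p ∈ X)
    (hproj : ∀ y ∈ X, ‖x - p‖ ≤ ‖x - y‖)
    (hHoffman : Metric.infDist x X ≤ β * ∑ i, Metric.infDist x {y | ⟪a i, y⟫ ≤ b i}) :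
    ‖x - p‖ ≤ β * ∑ i, huber δ (a i) (b i) x := calc
  ‖x - p‖ ≤ Metric.infDist x X :=
    (Metric.le_infDist ⟨p, hp⟩).2 fun y hy => dist_eq_norm x y ▸ hproj y hy
  _ ≤ β * ∑ i, Metric.infDist x {y | ⟪a i, y⟫ ≤ b i} := hHoffman
  _ ≤ β * ∑ i, huber δ (a i) (b i) x := by
    gcongr with i
    exact infDist_halfSpace_le_huber hδ (ha i) x

end Penalty

theorem penalized_sol_dist_bound_general {n m : ℕ} (hm : 0 < m) (μ : ℝ) (hμ : 0 < μ)
    (f : EuclideanSpace ℝ (Fin n) → ℝ) (hf : StrongConvexOn Set.univ μ f)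
    (hdf : Differentiable ℝ f)
    (a : Fin m → EuclideanSpace ℝ (Fin n)) (ha : ∀ i, a i ≠ 0) (b : Fin m → ℝ)
    (X : Set (EuclideanSpace ℝ (Fin n)))
    (hX : X = {x | ∀ i, ⟪a i, x⟫ ≤ b i})
    (xstar : EuclideanSpace ℝ (Fin n)) (hxstarX : xstar ∈ X) (hxstar : IsMinOn f X xstar)
    (γ δ : ℝ) (hγ : 0 < γ) (hδ : 0 < δ)
    (xg : EuclideanSpace ℝ (Fin n))
    (hxg : IsMinOn (fun x => f x + (γ / m) * ∑ i, huber δ (a i) (b i) x) Set.univ xg)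
    (p : EuclideanSpace ℝ (Fin n)) (hpX : p ∈ X) (hproj : ∀ y ∈ X, ‖xg - p‖ ≤ ‖xg - y‖)
    (β : ℝ) (hβ : 0 < β)
    (hHoffman : ∀ x, Metric.infDist x X ≤
      β * ∑ i, Metric.infDist x {y : EuclideanSpace ℝ (Fin n) | ⟪a i, y⟫ ≤ b i})
    (L : ℝ) (hL : 0 < L) (hLbound : ∀ z ∈ segment ℝ xg p, ‖gradient f z‖ ≤ L)
    (hγL : 4 * m * β * L ≤ γ) :
    ‖xstar - xg‖ ^ 2 ≤ γ * δ / (2 * μ * ⨅ i, ‖a i‖) := by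
  have : Nonempty (Fin m) := ⟨⟨0, hm⟩⟩
  have hm₀ : (0 : ℝ) < m := Nat.cast_pos.2 hm
  have hgrowth := (hf.add_convexOn ((convexOn_sum_huber a b hδ).smul (div_nonneg hγ.le hm₀.le)))
    |>.add_sq_le_of_isMinOn (mem_univ xg) (mem_univ xstar) hxg
  simp only [Pi.add_apply, smul_eq_mul] at hgrowth
  have hpenalty : γ / m * ∑ i, huber δ (a i) (b i) xstar ≤ γ * δ / (4 * ⨅ i, ‖a i‖) := calc
    _ ≤ γ / m * (m * (δ / (4 * ⨅ i, ‖a i‖))) := by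
      gcongr
      simpa using sum_huber_le_of_mem a b hδ ha (by rwa [hX] at hxstarX)
    _ = γ * δ / (4 * ⨅ i, ‖a i‖) := by field_simp
  have hfeasible : f xstar ≤ f xg + γ / m * ∑ i, huber δ (a i) (b i) xg := calc
    f xstar ≤ f p := hxstar hpX
    _ ≤ f xg + L * ‖xg - p‖ := by
      have := (le_abs_self _).trans (norm_sub_le_of_norm_gradient_le hdf hLbound)
      rw [norm_sub_rev] at this
      linarith
    _ ≤ f xg + L * (β * ∑ i, huber δ (a i) (b i) xg) := by
      gcongr
      exact norm_sub_le_mul_sum_huber a b hδ ha hβ.le hpX hproj (hHoffman xg)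
    _ ≤ f xg + γ / m * ∑ i, huber δ (a i) (b i) xg := by
      rw [← mul_assoc, mul_comm L β]
      gcongr
      · exact Finset.sum_nonneg fun i _ => huber_nonneg hδ xg
      · exact (le_div_iff₀ hm₀).2 (by nlinarith [mul_pos hβ hL])
  calc ‖xstar - xg‖ ^ 2 = 2 / μ * (μ / 2 * ‖xstar - xg‖ ^ 2) := by field_simp
    _ ≤ 2 / μ * (γ * δ / (4 * ⨅ i, ‖a i‖)) := by gcongr; linarith
    _ = γ * δ / (2 * μ * ⨅ i, ‖a i‖) := by ring

/-- Under the error-bound lemma hypotheses, if moreover `γ ≥ 4mβL`, then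
`‖x* − x_{γδ}*‖² ≤ γδ/(2μ α_min)`. -/
theorem penalized_sol_dist_bound {n m : ℕ} (hm : 0 < m) (μ : ℝ) (hμ : 0 < μ)
    (f : EuclideanSpace ℝ (Fin n) → ℝ) (hf : StrongConvexOn Set.univ μ f)
    (hdf : Differentiable ℝ f)
    (a : Fin m → EuclideanSpace ℝ (Fin n)) (ha : ∀ i, a i ≠ 0) (b : Fin m → ℝ)
    (X : Set (EuclideanSpace ℝ (Fin n)))
    (hX : X = {x | ∀ i, ⟪a i, x⟫ ≤ b i}) (hXne : X.Nonempty)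
    (xstar : EuclideanSpace ℝ (Fin n)) (hxstarX : xstar ∈ X) (hxstar : IsMinOn f X xstar)
    (γ δ : ℝ) (hγ : 0 < γ) (hδ : 0 < δ)
    (xg : EuclideanSpace ℝ (Fin n))
    (hxg : IsMinOn (fun x => f x + (γ / m) * ∑ i, huber δ (a i) (b i) x) Set.univ xg)
    (p : EuclideanSpace ℝ (Fin n)) (hpX : p ∈ X) (hproj : ∀ y ∈ X, ‖xg - p‖ ≤ ‖xg - y‖)
    (β : ℝ) (hβ : 0 < β)
    (hHoffman : ∀ x, Metric.infDist x X ≤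
      β * ∑ i, Metric.infDist x {y : EuclideanSpace ℝ (Fin n) | ⟪a i, y⟫ ≤ b i})
    (L : ℝ) (hL : 0 < L) (hLbound : ∀ z ∈ segment ℝ xg p, ‖gradient f z‖ ≤ L)
    (hγL : 4 * m * β * L ≤ γ) :
    ‖xstar - xg‖ ^ 2 ≤ γ * δ / (2 * μ * ⨅ i, ‖a i‖) :=
  penalized_sol_dist_bound_general hm μ hμ f hf hdf a ha b X hX xstar hxstarX hxstar γ δ hγ hδ xg
    hxg p hpX hproj β hβ hHoffman L hL hLbound hγL
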